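/- arXiv:2309.13771 — 5 statements merged into one kernel-verified Lean document; each statement's English description precedes it below -/
import Mathlib

section
/- Let I ⊂ S = K[x_1,…,x_n] be a monomial ideal and let I^℘ ⊂ S^℘ be its polarization. Then for all k with 1 ≤ k ≤ ν(I), the polarization of the k-th matching power equals the k-th matching power of the polarization: (I^{[k]})^℘ = (I^℘)^{[k]}. -/
open MvPolynomial CategoryTheory

noncomputable section

namespace MatchingPowers

variable {K : Type} [Field K] {σ : Type*}

/-- The total degree of an exponent vector. -/
def degF (a : σ →₀ ℕ) : ℕ := a.sum fun _ e => e

/-- An ideal of a polynomial ring is a *monomial ideal* if it is generated by monomials. -/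
def IsMonomialIdeal (I : Ideal (MvPolynomial σ K)) : Prop :=
  ∃ A : Set (σ →₀ ℕ), I = Ideal.span ((fun a => (monomial a (1 : K) : MvPolynomial σ K)) '' A)

/-- The set of (exponent vectors of) minimal monomial generators of a monomial ideal `I`:
monomials of `I` such that no proper monomial divisor belongs to `I`. -/
def minGens (I : Ideal (MvPolynomial σ K)) : Set (σ →₀ ℕ) :=
  {a | (monomial a (1 : K) : MvPolynomial σ K) ∈ I ∧
    ∀ b : σ →₀ ℕ, (monomial b (1 : K) : MvPolynomial σ K) ∈ I → b ≤ a → b = a}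

/-- The `k`-th matching power of a monomial ideal: the ideal generated by all products
`u₁ ⋯ u_k` of minimal monomial generators with pairwise disjoint supports. -/
def matchingPower (I : Ideal (MvPolynomial σ K)) (k : ℕ) : Ideal (MvPolynomial σ K) :=
  Ideal.span {f | ∃ u : Fin k → (σ →₀ ℕ),
    (∀ i, u i ∈ minGens I) ∧
    (∀ i j, i ≠ j → Disjoint (u i).support (u j).support) ∧
    f = monomial (∑ i, u i) (1 : K)}

/-- The monomial grade `ν(I)`: the maximum size of a set of monomials of `I` with pairwise
disjoint supports. -/
def monomialGrade (I : Ideal (MvPolynomial σ K)) : ℕ :=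
  sSup {k | ∃ u : Fin k → (σ →₀ ℕ), Function.Injective u ∧
    (∀ i, (monomial (u i) (1 : K) : MvPolynomial σ K) ∈ I) ∧
    ∀ i j, i ≠ j → Disjoint (u i).support (u j).support}

/-- The initial degree of a monomial ideal: the least degree of a monomial belonging to it. -/
def indeg (I : Ideal (MvPolynomial σ K)) : ℕ :=
  sInf {d | ∃ a : σ →₀ ℕ, (monomial a (1 : K) : MvPolynomial σ K) ∈ I ∧ degF a = d}

/-- `deg_{x_i}(I)`: the maximum of the `x_i`-degrees of the minimal monomial generators. -/
def boundingDeg (I : Ideal (MvPolynomial σ K)) (i : σ) : ℕ :=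
  sSup {e | ∃ a ∈ minGens I, a i = e}

/-- `|deg(I)|`: the sum of the entries of the bounding multidegree of `I`. -/
def totalBoundingDeg [Fintype σ] (I : Ideal (MvPolynomial σ K)) : ℕ :=
  ∑ i, boundingDeg I i

/-- The maximal graded ideal `(x_i : i)` of the polynomial ring. -/
def varsIdeal (K : Type) [Field K] (σ : Type*) : Ideal (MvPolynomial σ K) :=
  Ideal.span (Set.range (X : σ → MvPolynomial σ K))

/-- The depth of `S/I`: the maximal length of a regular sequence on `S/I` consisting of
elements of the maximal graded ideal. -/
def depthQ (I : Ideal (MvPolynomial σ K)) : ℕ :=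
  sSup {k | ∃ rs : List (MvPolynomial σ K), rs.length = k ∧
    (∀ r ∈ rs, r ∈ varsIdeal K σ) ∧
    RingTheory.Sequence.IsRegular (MvPolynomial σ K ⧸ I) rs}

/-- The projective dimension of a module, defined through vanishing of `Ext`. -/
def pdim {R : Type} [CommRing R] (M : ModuleCat R) : ℕ∞ :=
  sInf {p : ℕ∞ | ∀ (N : ModuleCat R) (i : ℕ), p < (i : ℕ∞) →
    Subsingleton (((Ext R (ModuleCat R) i).obj (Opposite.op M)).obj N)}

/-- The projective dimension of an ideal, viewed as a module over the ring. -/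
def pdimIdeal {R : Type} [CommRing R] (I : Ideal R) : ℕ∞ :=
  pdim (ModuleCat.of R I)

/-- The normalized depth function
`g_I(k) = depth(S/I^{[k]}) + |deg(I)| - n - (indeg(I^{[k]}) - 1)`. -/
def gFun [Fintype σ] (I : Ideal (MvPolynomial σ K)) (k : ℕ) : ℤ :=
  (depthQ (matchingPower I k) : ℤ) + (totalBoundingDeg I : ℤ) - (Fintype.card σ : ℤ)
    - ((indeg (matchingPower I k) : ℤ) - 1)

/-- A monomial ideal is polymatroidal if it is generated in a single degree and the
exchange property holds for its minimal monomial generators: if `deg_{x_i} u > deg_{x_i} v`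
then `x_j · u / x_i` is a minimal generator for some `j` with `deg_{x_j} u < deg_{x_j} v`. -/
def IsPolymatroidal (I : Ideal (MvPolynomial σ K)) : Prop :=
  (∃ d, ∀ a ∈ minGens I, degF a = d) ∧
  ∀ a ∈ minGens I, ∀ b ∈ minGens I, ∀ i : σ, b i < a i →
    ∃ j : σ, a j < b j ∧ a + Finsupp.single j 1 - Finsupp.single i 1 ∈ minGens I

/-- The polarization of an exponent vector `a`, relative to a bound `D` on the exponents:
the squarefree exponent vector on the variables `x_{i,j}`, `j < D i`, whose `(i,j)`-entry is
`1` exactly when `j < a i`. -/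
def polarizeExp [Fintype σ] (D : σ → ℕ) (a : σ →₀ ℕ) : ((i : σ) × Fin (D i)) →₀ ℕ :=
  Finsupp.equivFunOnFinite.symm (fun p => if (p.2 : ℕ) < a p.1 then 1 else 0)

/-- The polarization of a monomial ideal `I`, relative to a bound `D` on the exponents:
the squarefree monomial ideal of `K[x_{i,j} : j < D i]` generated by the polarizations of
the minimal monomial generators of `I`. -/
def polarizedIdeal [Fintype σ] (D : σ → ℕ) (I : Ideal (MvPolynomial σ K)) :
    Ideal (MvPolynomial ((i : σ) × Fin (D i)) K) :=
  Ideal.span {f | ∃ a ∈ minGens I, f = monomial (polarizeExp D a) (1 : K)}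

/-! Polarization `a ↦ a^℘` is monotone, reflects divisibility on exponent vectors bounded by
`deg(I)`, preserves and reflects disjointness of supports, and is additive on support-disjoint
sums. Hence it maps the matching products of `G(I)` bijectively onto those of
`G(I^℘) = G(I)^℘`. As the polarization of a monomial ideal can be computed from any monomial
generating set, `(I^{[k]})^℘` is generated by the polarized matching products of `G(I)`, that is,
by the matching products of `G(I^℘)`. -/

lemma minGens_eq_setOf_minimal (I : Ideal (MvPolynomial σ K)) :
    minGens I = {a | Minimal (fun b => (monomial b (1 : K) : MvPolynomial σ K) ∈ I) a} := by
  ext a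
  simp only [minGens, minimal_iff, eq_comm, Set.mem_ofPred_eq]

lemma exists_mem_minGens_le {I : Ideal (MvPolynomial σ K)} {a : σ →₀ ℕ}
    (ha : (monomial a (1 : K) : MvPolynomial σ K) ∈ I) : ∃ b ∈ minGens I, b ≤ a := by
  obtain ⟨b, hba, hb⟩ :=
    exists_minimal_le_of_wellFoundedLT
      (fun b => (monomial b (1 : K) : MvPolynomial σ K) ∈ I) a ha
  exact ⟨b, by rwa [minGens_eq_setOf_minimal], hba⟩

lemma isAntichain_minGens (I : Ideal (MvPolynomial σ K)) :
    IsAntichain (· ≤ ·) (minGens I) := by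
  rw [minGens_eq_setOf_minimal]
  exact setOfPred_minimal_antichain _

lemma minGens_finite [Finite σ] (I : Ideal (MvPolynomial σ K)) : (minGens I).Finite :=
  WellQuasiOrderedLE.finite_of_isAntichain (isAntichain_minGens I)

lemma le_boundingDeg [Finite σ] {I : Ideal (MvPolynomial σ K)} {a : σ →₀ ℕ}
    (ha : a ∈ minGens I) (i : σ) : a i ≤ boundingDeg I i :=
  le_csSup ((minGens_finite I).image (fun b : σ →₀ ℕ => b i)).bddAbove ⟨a, ha, rfl⟩

lemma monomial_mem_span_monomial_image_iff {R : Type*} [CommSemiring R] [Nontrivial R]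
    {A : Set (σ →₀ ℕ)} {a : σ →₀ ℕ} :
    (monomial a (1 : R) : MvPolynomial σ R) ∈ Ideal.span ((fun b => monomial b (1 : R)) '' A) ↔
      ∃ b ∈ A, b ≤ a := by
  classical
  rw [mem_ideal_span_monomial_image, support_monomial, if_neg one_ne_zero]
  simp

lemma span_monomial_image_le_of_forall_exists_le {R : Type*} [CommSemiring R] [Nontrivial R]
    {A B : Set (σ →₀ ℕ)} (h : ∀ a ∈ A, ∃ b ∈ B, b ≤ a) :
    Ideal.span ((fun a => monomial a (1 : R)) '' A : Set (MvPolynomial σ R)) ≤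
      Ideal.span ((fun b => monomial b (1 : R)) '' B) := by
  rw [Ideal.span_le]
  rintro _ ⟨a, ha, rfl⟩
  exact monomial_mem_span_monomial_image_iff.mpr (h a ha)

lemma minGens_span_monomial_image_subset (A : Set (σ →₀ ℕ)) :
    minGens (Ideal.span ((fun b => monomial b (1 : K)) '' A : Set (MvPolynomial σ K))) ⊆ A := by
  rintro a ⟨ha, hmin⟩
  obtain ⟨b, hb, hba⟩ := monomial_mem_span_monomial_image_iff.mp ha
  rwa [← hmin b (Ideal.subset_span ⟨b, hb, rfl⟩) hba]

lemma minGens_span_monomial_image {A : Set (σ →₀ ℕ)} (hA : IsAntichain (· ≤ ·) A) :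
    minGens (Ideal.span ((fun b => monomial b (1 : K)) '' A : Set (MvPolynomial σ K))) = A := by
  refine (minGens_span_monomial_image_subset A).antisymm fun a ha =>
    ⟨Ideal.subset_span ⟨a, ha, rfl⟩, fun b hb hba => ?_⟩
  obtain ⟨c, hc, hcb⟩ := monomial_mem_span_monomial_image_iff.mp hb
  exact le_antisymm hba (hA.eq hc ha (hcb.trans hba) ▸ hcb)

def matchingProducts (I : Ideal (MvPolynomial σ K)) (k : ℕ) : Set (σ →₀ ℕ) :=
  {a | ∃ u : Fin k → (σ →₀ ℕ), (∀ i, u i ∈ minGens I) ∧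
    (∀ i j, i ≠ j → Disjoint (u i).support (u j).support) ∧ a = ∑ i, u i}

lemma matchingPower_eq_span (I : Ideal (MvPolynomial σ K)) (k : ℕ) :
    matchingPower I k =
      Ideal.span ((fun a => monomial a (1 : K)) '' matchingProducts I k) := by
  unfold matchingPower matchingProducts
  congr 1
  ext f
  simp only [Set.mem_ofPred_eq, Set.mem_image]
  constructor
  · rintro ⟨u, hu, hdisj, rfl⟩
    exact ⟨_, ⟨u, hu, hdisj, rfl⟩, rfl⟩
  · rintro ⟨_, ⟨u, hu, hdisj, rfl⟩, rfl⟩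
    exact ⟨u, hu, hdisj, rfl⟩

section Polarization

variable [Fintype σ] {D : σ → ℕ} {a b : σ →₀ ℕ}

lemma polarizeExp_apply (p : (i : σ) × Fin (D i)) :
    polarizeExp D a p = if (p.2 : ℕ) < a p.1 then 1 else 0 := rfl

lemma polarizedIdeal_eq_span (I : Ideal (MvPolynomial σ K)) :
    polarizedIdeal D I =
      Ideal.span ((fun a => monomial a (1 : K)) '' (polarizeExp D '' minGens I)) := by
  rw [polarizedIdeal, Set.image_image]
  congr 1
  ext f
  simp [eq_comm]

lemma polarizeExp_mono (D : σ → ℕ) : Monotone (polarizeExp D) := by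
  intro a b hab p
  by_cases ha : (p.2 : ℕ) < a p.1
  · simp [polarizeExp_apply, ha, ha.trans_le (hab p.1)]
  · simp [polarizeExp_apply, ha]

lemma le_of_polarizeExp_le (ha : ∀ i, a i ≤ D i) (h : polarizeExp D a ≤ polarizeExp D b) :
    a ≤ b := by
  intro i
  by_contra! hlt
  simpa [polarizeExp_apply, hlt] using h ⟨i, b i, hlt.trans_le (ha i)⟩

lemma disjoint_support_polarizeExp_iff (ha : ∀ i, a i ≤ D i) :
    Disjoint (polarizeExp D a).support (polarizeExp D b).support ↔
      Disjoint a.support b.support := by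
  simp only [Finset.disjoint_left, Finsupp.mem_support_iff, polarizeExp_apply, ne_eq,
    ite_eq_right_iff, Classical.not_imp, one_ne_zero, not_false_eq_true, and_true]
  constructor
  · intro h i hai hbi
    -- the variable `x_{i,0}` divides both polarizations
    exact h (a := ⟨i, 0, (Nat.pos_of_ne_zero hai).trans_le (ha i)⟩)
      (by simp; omega) (by simp; omega)
  · intro h p hpa hpb
    exact h (a := p.1) (by omega) (by omega)

lemma polarizeExp_add (h : Disjoint a.support b.support) :
    polarizeExp D (a + b) = polarizeExp D a + polarizeExp D b := by
  ext p
  have : a p.1 = 0 ∨ b p.1 = 0 := by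
    by_contra! hab
    exact Finset.disjoint_left.mp h (Finsupp.mem_support_iff.mpr hab.1)
      (Finsupp.mem_support_iff.mpr hab.2)
  simp only [Finsupp.add_apply, polarizeExp_apply]
  rcases this with h0 | h0 <;> simp [h0]

lemma polarizeExp_sum {ι : Type*} {u : ι → σ →₀ ℕ}
    (hu : ∀ i j, i ≠ j → Disjoint (u i).support (u j).support) (s : Finset ι) :
    polarizeExp D (∑ i ∈ s, u i) = ∑ i ∈ s, polarizeExp D (u i) := by
  classical
  induction s using Finset.induction_on with
  | empty => ext; simp [polarizeExp_apply]
  | insert i s hi ih =>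
    have hdisj : Disjoint (u i).support (∑ j ∈ s, u j).support :=
      Finset.disjoint_of_subset_right Finsupp.support_finsetSum
        ((Finset.disjoint_biUnion_right _ _ _).mpr fun j hj =>
          hu i j (ne_of_mem_of_not_mem hj hi).symm)
    rw [Finset.sum_insert hi, Finset.sum_insert hi, polarizeExp_add hdisj, ih]

lemma polarizedIdeal_span_monomial_image (D : σ → ℕ) (A : Set (σ →₀ ℕ)) :
    polarizedIdeal D (Ideal.span ((fun a => monomial a (1 : K)) '' A)) =
      Ideal.span ((fun a => monomial a (1 : K)) '' (polarizeExp D '' A)) := by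
  rw [polarizedIdeal_eq_span]
  refine le_antisymm (span_monomial_image_le_of_forall_exists_le ?_)
    (span_monomial_image_le_of_forall_exists_le ?_)
  · rintro _ ⟨a, ha, rfl⟩
    exact ⟨_, ⟨a, minGens_span_monomial_image_subset A ha, rfl⟩, le_rfl⟩
  · rintro _ ⟨a, ha, rfl⟩
    obtain ⟨b, hb, hba⟩ := exists_mem_minGens_le (K := K)
      (monomial_mem_span_monomial_image_iff.mpr ⟨a, ha, le_rfl⟩)
    exact ⟨_, ⟨b, hb, rfl⟩, polarizeExp_mono D hba⟩

lemma minGens_polarizedIdeal (I : Ideal (MvPolynomial σ K)) :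
    minGens (polarizedIdeal (boundingDeg I) I) = polarizeExp (boundingDeg I) '' minGens I := by
  rw [polarizedIdeal_eq_span]
  refine minGens_span_monomial_image ?_
  rintro _ ⟨a, ha, rfl⟩ _ ⟨b, hb, rfl⟩ hne hle
  exact hne (congrArg _ ((isAntichain_minGens I).eq ha hb
    (le_of_polarizeExp_le (le_boundingDeg ha) hle)))

lemma polarizeExp_image_matchingProducts (I : Ideal (MvPolynomial σ K)) (k : ℕ) :
    polarizeExp (boundingDeg I) '' matchingProducts I k =
      matchingProducts (polarizedIdeal (boundingDeg I) I) k := by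
  ext v
  simp only [matchingProducts, minGens_polarizedIdeal, Set.mem_image, Set.mem_ofPred_eq]
  constructor
  · rintro ⟨_, ⟨u, hu, hdisj, rfl⟩, rfl⟩
    exact ⟨fun i => polarizeExp _ (u i), fun i => ⟨u i, hu i, rfl⟩,
      fun i j hij =>
        (disjoint_support_polarizeExp_iff (le_boundingDeg (hu i))).mpr (hdisj i j hij),
      polarizeExp_sum hdisj _⟩
  · rintro ⟨w, hw, hdisj, rfl⟩
    choose u hu hw using hw
    obtain rfl : (fun i => polarizeExp _ (u i)) = w := funext hw
    have hudisj : ∀ i j, i ≠ j → Disjoint (u i).support (u j).support := fun i j hij =>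
      (disjoint_support_polarizeExp_iff (le_boundingDeg (hu i))).mp (hdisj i j hij)
    exact ⟨_, ⟨u, hu, hudisj, rfl⟩, polarizeExp_sum hudisj _⟩

end Polarization

theorem polarizedIdeal_matchingPower_general (n : ℕ) (K : Type) [Field K]
    (I : Ideal (MvPolynomial (Fin n) K)) (k : ℕ) :
    polarizedIdeal (boundingDeg I) (matchingPower I k)
      = matchingPower (polarizedIdeal (boundingDeg I) I) k := by
  rw [matchingPower_eq_span I k, polarizedIdeal_span_monomial_image, matchingPower_eq_span,
    polarizeExp_image_matchingProducts]

/-- For `1 ≤ k ≤ ν(I)`, the polarization of the `k`-th matching power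
equals the `k`-th matching power of the polarization: `(I^{[k]})^℘ = (I^℘)^{[k]}`. -/
theorem polarizedIdeal_matchingPower (n : ℕ) (K : Type) [Field K]
    (I : Ideal (MvPolynomial (Fin n) K)) (hI : IsMonomialIdeal I)
    (k : ℕ) (hk1 : 1 ≤ k) (hk2 : k ≤ monomialGrade I) :
    polarizedIdeal (boundingDeg I) (matchingPower I k)
      = matchingPower (polarizedIdeal (boundingDeg I) I) k :=
  polarizedIdeal_matchingPower_general n K I k

end MatchingPowers
end
end

section
/- Let D be a weighted oriented graph with underlying simple graph G, and let 1 ≤ k ≤ ν(G). Then the radical of the k-th matching power of I(D) equals the k-th matching power of I(G): √(I(D)^{[k]}) = I(G)^{[k]}. -/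
/-
Both matching powers are monomial ideals, and their generators come in pairs indexed by the
`k`-matchings of `G`: a matching `M`, oriented by `D`, gives the generator `∏ x_i x_j^{w_j}` of
`I(D)^{[k]}` and the squarefree generator `x_M = ∏ x_i x_j` of `I(G)^{[k]}`, with the same support
and `x_M` dividing the former. Hence `I(D)^{[k]} ⊆ I(G)^{[k]}`, and every generator of `I(G)^{[k]}`
has a power in `I(D)^{[k]}`. The equality follows because an ideal generated by squarefree
monomials is radical.
-/

open MvPolynomial CategoryTheory

noncomputable section

namespace MatchingPowers

variable {K : Type} [Field K] {σ : Type*}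

/-- A vertex-weighted oriented graph: a simple graph without isolated vertices, together with
an orientation of each edge and positive integer weights on the vertices, where every source
(vertex with no incoming directed edge) has weight `1`. -/
structure WOGraph (V : Type*) where
  /-- the underlying simple graph -/
  graph : SimpleGraph V
  /-- the orientation: `dir i j` means there is a directed edge from `i` to `j` -/
  dir : V → V → Prop
  /-- the weight function -/
  w : V → ℕ
  dir_adj : ∀ ⦃i j⦄, dir i j → graph.Adj i j
  adj_dir : ∀ ⦃i j⦄, graph.Adj i j → dir i j ∨ dir j i
  not_both : ∀ ⦃i j⦄, dir i j → ¬ dir j i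
  one_le_w : ∀ i, 1 ≤ w i
  source_w : ∀ i, (∀ j, ¬ dir j i) → w i = 1
  no_isolated : ∀ i, ∃ j, graph.Adj i j

variable {V : Type*}

/-- The edge ideal of a weighted oriented graph: generated by the monomials `x_i x_j^{w j}`
for the directed edges `(i,j)`. -/
def edgeIdealD (K : Type) [Field K] (D : WOGraph V) : Ideal (MvPolynomial V K) :=
  Ideal.span {f | ∃ i j, D.dir i j ∧
    f = monomial (Finsupp.single i 1 + Finsupp.single j (D.w j)) (1 : K)}

/-- The edge ideal of a simple graph: generated by the monomials `x_i x_j` for the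
edges `{i,j}`. -/
def edgeIdealG (K : Type) [Field K] (G : SimpleGraph V) : Ideal (MvPolynomial V K) :=
  Ideal.span {f | ∃ i j, G.Adj i j ∧
    f = monomial (Finsupp.single i 1 + Finsupp.single j 1) (1 : K)}

/-- A finite set of edges of `G` which are pairwise disjoint. -/
def IsMatchingSet (G : SimpleGraph V) (M : Finset (Sym2 V)) : Prop :=
  (∀ e ∈ M, e ∈ G.edgeSet) ∧ ∀ e ∈ M, ∀ f ∈ M, e ≠ f → ∀ v, v ∈ e → v ∉ f

/-- The matching number of a simple graph: the maximum size of a matching. -/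
def matchingNumber (G : SimpleGraph V) : ℕ :=
  sSup {k | ∃ M : Finset (Sym2 V), IsMatchingSet G M ∧ M.card = k}

/-- Every subgraph of `G` has at most one perfect matching (a perfect matching of a subgraph
`H` being a matching `M ≤ H` whose vertex set is all of `H.verts`). -/
def HasAtMostOnePerfectMatching (G : SimpleGraph V) : Prop :=
  ∀ H M₁ M₂ : G.Subgraph,
    M₁ ≤ H → M₁.verts = H.verts → M₁.IsMatching →
    M₂ ≤ H → M₂.verts = H.verts → M₂.IsMatching → M₁ = M₂

/-- The maximal number of edges of an induced path in `G`. -/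
def maxInducedPathLength (G : SimpleGraph V) : ℕ :=
  sSup {m | ∃ p : Fin (m + 1) → V, Function.Injective p ∧
    ∀ i j : Fin (m + 1), G.Adj (p i) (p j) ↔ ((i : ℕ) + 1 = j ∨ (j : ℕ) + 1 = i)}

abbrev monomialSpan (K : Type) [Field K] (A : Set (σ →₀ ℕ)) : Ideal (MvPolynomial σ K) :=
  Ideal.span ((fun a => monomial a (1 : K)) '' A)

section MonomialIdeals

variable {A B : Set (σ →₀ ℕ)}

lemma monomial_mem_monomialSpan_iff {b : σ →₀ ℕ} :
    monomial b (1 : K) ∈ monomialSpan K A ↔ ∃ a ∈ A, a ≤ b := by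
  classical
  simp [monomialSpan, mem_ideal_span_monomial_image, support_monomial]

lemma monomialSpan_le_monomialSpan (h : ∀ b ∈ B, ∃ a ∈ A, a ≤ b) :
    monomialSpan K B ≤ monomialSpan K A :=
  Ideal.span_le.mpr <| Set.image_subset_iff.mpr fun b hb =>
    monomial_mem_monomialSpan_iff.mpr (h b hb)

lemma minGens_monomialSpan (hA : IsAntichain (· ≤ ·) A) : minGens (monomialSpan K A) = A := by
  ext a
  simp only [minGens, Set.mem_ofPred_eq, monomial_mem_monomialSpan_iff]
  constructor
  · rintro ⟨⟨b, hb, hba⟩, hmin⟩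
    exact hmin b ⟨b, hb, le_rfl⟩ hba ▸ hb
  · intro ha
    refine ⟨⟨a, ha, le_rfl⟩, fun b ⟨c, hc, hcb⟩ hba => ?_⟩
    have hca : c = a := hA.eq hc ha (hcb.trans hba)
    exact le_antisymm hba (hca ▸ hcb)

lemma monomial_mem_radical_monomialSpan {a b : σ →₀ ℕ} (ha : a ∈ A)
    (hab : a.support ⊆ b.support) : monomial b (1 : K) ∈ (monomialSpan K A).radical := by
  refine ⟨a.degree, ?_⟩
  rw [monomial_pow, one_pow, monomial_mem_monomialSpan_iff]
  refine ⟨a, ha, fun i => ?_⟩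
  by_cases hi : i ∈ a.support
  · have hb : 1 ≤ b i := Nat.one_le_iff_ne_zero.mpr (Finsupp.mem_support_iff.mp (hab hi))
    calc a i ≤ a.degree := Finsupp.le_degree i a
      _ ≤ a.degree * b i := Nat.le_mul_of_pos_right _ hb
  · simp [Finsupp.notMem_support_iff.mp hi]

lemma le_of_support_subset {a b : σ →₀ ℕ} (ha : ∀ i, a i ≤ 1) (hab : a.support ⊆ b.support) :
    a ≤ b := fun i => by
  by_cases hi : i ∈ a.support
  · exact (ha i).trans (Nat.one_le_iff_ne_zero.mpr (Finsupp.mem_support_iff.mp (hab hi)))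
  · simp [Finsupp.notMem_support_iff.mp hi]

lemma aeval_ite_X_monomial [DecidableEq σ] (T : Finset σ) (c : σ →₀ ℕ) (x : K) :
    aeval (fun i => if i ∈ T then X i else 0) (monomial c x : MvPolynomial σ K) =
      if c.support ⊆ T then monomial c x else 0 := by
  rw [aeval_monomial, Finsupp.prod]
  split_ifs with hc
  · rw [monomial_eq, Finsupp.prod, algebraMap_eq]
    congr 1
    exact Finset.prod_congr rfl fun i hi => by rw [if_pos (hc hi)]
  · obtain ⟨i, hic, hiT⟩ := Finset.not_subset.mp hc
    rw [Finset.prod_eq_zero hic (by rw [if_neg hiT, zero_pow (Finsupp.mem_support_iff.mp hic)]),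
      mul_zero]

lemma coeff_aeval_ite_X [DecidableEq σ] (T : Finset σ) (g : MvPolynomial σ K) (b : σ →₀ ℕ) :
    coeff b (aeval (fun i => if i ∈ T then X i else 0) g : MvPolynomial σ K) =
      if b.support ⊆ T then coeff b g else 0 := by
  induction g using MvPolynomial.induction_on' with
  | monomial c x =>
    rw [aeval_ite_X_monomial]
    split_ifs with hc hb hb
    · rfl
    · rw [coeff_monomial, if_neg (by rintro rfl; exact hb hc)]
    · rw [coeff_zero, coeff_monomial, if_neg (by rintro rfl; exact hc hb)]
    · rfl
  | add p q hp hq =>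
    simp only [map_add, coeff_add, hp, hq]
    split_ifs <;> simp

lemma radical_monomialSpan_of_le_one (hA : ∀ a ∈ A, ∀ i, a i ≤ 1) :
    (monomialSpan K A).radical = monomialSpan K A := by
  classical
  refine le_antisymm (fun f ⟨n, hfn⟩ => ?_) Ideal.le_radical
  rw [monomialSpan, mem_ideal_span_monomial_image] at hfn ⊢
  intro m hm
  -- Killing the variables outside `m.support` keeps the term `m` of `f`, so `φ (f ^ n) ≠ 0`
  -- has a term `m'` of `f ^ n` with `m'.support ⊆ m.support`.
  let φ : MvPolynomial σ K →ₐ[K] MvPolynomial σ K :=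
    aeval fun i => if i ∈ m.support then X i else 0
  have hφf : φ f ≠ 0 := fun h => by
    have hm_coeff : coeff m (φ f) = coeff m f := by
      rw [coeff_aeval_ite_X, if_pos subset_rfl]
    rw [h, coeff_zero] at hm_coeff
    exact mem_support_iff.mp hm hm_coeff.symm
  obtain ⟨m', hm'⟩ := ne_zero_iff.mp (pow_ne_zero n hφf)
  rw [← map_pow, coeff_aeval_ite_X] at hm'
  split_ifs at hm' with hsub
  · obtain ⟨a, ha, ham'⟩ := hfn m' (mem_support_iff.mpr hm')
    exact ⟨a, ha, le_of_support_subset (hA a ha) ((Finsupp.support_mono ham').trans hsub)⟩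
  · exact absurd rfl hm'

end MonomialIdeals

def matchingSums (A : Set (σ →₀ ℕ)) (k : ℕ) : Set (σ →₀ ℕ) :=
  {s | ∃ u : Fin k → σ →₀ ℕ, (∀ i, u i ∈ A) ∧
    (∀ i j, i ≠ j → Disjoint (u i).support (u j).support) ∧ s = ∑ i, u i}

section MatchingSums

variable {A B : Set (σ →₀ ℕ)} {k : ℕ}

lemma matchingPower_eq_monomialSpan (I : Ideal (MvPolynomial σ K)) (k : ℕ) :
    matchingPower I k = monomialSpan K (matchingSums (minGens I) k) := by
  unfold matchingPower
  congr 1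
  ext f
  simp only [matchingSums, Set.mem_image, Set.mem_ofPred_eq]
  constructor
  · rintro ⟨u, hu, hdisj, rfl⟩
    exact ⟨_, ⟨u, hu, hdisj, rfl⟩, rfl⟩
  · rintro ⟨_, ⟨u, hu, hdisj, rfl⟩, rfl⟩
    exact ⟨u, hu, hdisj, rfl⟩

lemma le_one_of_mem_matchingSums (hA : ∀ a ∈ A, ∀ i, a i ≤ 1) {s : σ →₀ ℕ}
    (hs : s ∈ matchingSums A k) (i : σ) : s i ≤ 1 := by
  obtain ⟨u, huA, hu_disj, rfl⟩ := hs
  rw [Finsupp.finsetSum_apply]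
  by_cases hi : ∃ l, i ∈ (u l).support
  · obtain ⟨l, hl⟩ := hi
    rw [Finset.sum_eq_single l (fun l' _ hl' => Finsupp.notMem_support_iff.mp
      (Finset.disjoint_left.mp (hu_disj l l' hl'.symm) hl)) (by simp)]
    exact hA _ (huA l) i
  · push Not at hi
    simp [Finsupp.notMem_support_iff.mp (hi _)]

lemma exists_mem_matchingSums_of_forall_exists (r : (σ →₀ ℕ) → (σ →₀ ℕ) → Prop)
    (hr_support : ∀ a b, r a b → b.support ⊆ a.support)
    (hr_sum : ∀ u v : Fin k → σ →₀ ℕ, (∀ l, r (u l) (v l)) → r (∑ l, u l) (∑ l, v l))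
    (h : ∀ a ∈ A, ∃ b ∈ B, r a b) {s : σ →₀ ℕ} (hs : s ∈ matchingSums A k) :
    ∃ t ∈ matchingSums B k, r s t := by
  obtain ⟨u, huA, hu_disj, rfl⟩ := hs
  choose v hvB huv using fun l => h (u l) (huA l)
  refine ⟨_, ⟨v, hvB, fun i j hij => ?_, rfl⟩, hr_sum u v huv⟩
  exact (hu_disj i j hij).mono (hr_support _ _ (huv i)) (hr_support _ _ (huv j))

lemma support_sum_subset_support_sum {ι : Type*} (s : Finset ι) {u v : ι → σ →₀ ℕ}
    (h : ∀ i, (v i).support ⊆ (u i).support) :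
    (∑ i ∈ s, v i).support ⊆ (∑ i ∈ s, u i).support := by
  intro x
  simp only [Finsupp.mem_support_iff, Finsupp.finsetSum_apply, ne_eq, Finset.sum_eq_zero_iff]
  push Not
  exact fun ⟨i, hi, hvi⟩ =>
    ⟨i, hi, Finsupp.mem_support_iff.mp (h i (Finsupp.mem_support_iff.mpr hvi))⟩

end MatchingSums

section EdgeIdeals

def edgeExponents (G : SimpleGraph V) : Set (V →₀ ℕ) :=
  {a | ∃ i j, G.Adj i j ∧ a = Finsupp.single i 1 + Finsupp.single j 1}

def dirEdgeExponents (D : WOGraph V) : Set (V →₀ ℕ) :=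
  {a | ∃ i j, D.dir i j ∧ a = Finsupp.single i 1 + Finsupp.single j (D.w j)}

lemma edgeIdealG_eq_monomialSpan (G : SimpleGraph V) :
    edgeIdealG K G = monomialSpan K (edgeExponents G) := by
  unfold edgeIdealG
  congr 1
  ext f
  simp only [edgeExponents, Set.mem_image, Set.mem_ofPred_eq]
  constructor
  · rintro ⟨i, j, h, rfl⟩
    exact ⟨_, ⟨i, j, h, rfl⟩, rfl⟩
  · rintro ⟨_, ⟨i, j, h, rfl⟩, rfl⟩
    exact ⟨i, j, h, rfl⟩

lemma edgeIdealD_eq_monomialSpan (D : WOGraph V) :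
    edgeIdealD K D = monomialSpan K (dirEdgeExponents D) := by
  unfold edgeIdealD
  congr 1
  ext f
  simp only [dirEdgeExponents, Set.mem_image, Set.mem_ofPred_eq]
  constructor
  · rintro ⟨i, j, h, rfl⟩
    exact ⟨_, ⟨i, j, h, rfl⟩, rfl⟩
  · rintro ⟨_, ⟨i, j, h, rfl⟩, rfl⟩
    exact ⟨i, j, h, rfl⟩

lemma eq_and_eq_or_of_single_add_single_le {i j p q : V} {c d : ℕ} (hpq : p ≠ q) (hc : c ≠ 0)
    (h : Finsupp.single p 1 + Finsupp.single q c ≤ Finsupp.single i 1 + Finsupp.single j d) :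
    p = i ∧ q = j ∨ p = j ∧ q = i := by
  classical
  have hsub := (Finsupp.support_mono h).trans Finsupp.support_single_add_single_subset
  rw [Finsupp.support_single_add_single hpq one_ne_zero hc, Finset.insert_subset_iff,
    Finset.singleton_subset_iff, Finset.mem_insert, Finset.mem_singleton,
    Finset.mem_insert, Finset.mem_singleton] at hsub
  obtain ⟨rfl | rfl, rfl | rfl⟩ := hsub <;> simp_all

lemma isAntichain_edgeExponents (G : SimpleGraph V) : IsAntichain (· ≤ ·) (edgeExponents G) := by
  rintro _ ⟨p, q, hpq, rfl⟩ _ ⟨i, j, -, rfl⟩ hne hle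
  obtain ⟨rfl, rfl⟩ | ⟨rfl, rfl⟩ := eq_and_eq_or_of_single_add_single_le hpq.ne one_ne_zero hle
  · exact hne rfl
  · exact hne (add_comm _ _)

lemma isAntichain_dirEdgeExponents (D : WOGraph V) :
    IsAntichain (· ≤ ·) (dirEdgeExponents D) := by
  rintro _ ⟨p, q, hpq, rfl⟩ _ ⟨i, j, hij, rfl⟩ hne hle
  have hwq := Nat.one_le_iff_ne_zero.mp (D.one_le_w q)
  obtain ⟨rfl, rfl⟩ | ⟨rfl, rfl⟩ :=
    eq_and_eq_or_of_single_add_single_le (D.dir_adj hpq).ne hwq hle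
  · exact hne rfl
  · exact D.not_both hpq hij

lemma minGens_edgeIdealG (G : SimpleGraph V) :
    minGens (edgeIdealG K G) = edgeExponents G := by
  rw [edgeIdealG_eq_monomialSpan, minGens_monomialSpan (isAntichain_edgeExponents G)]

lemma minGens_edgeIdealD (D : WOGraph V) :
    minGens (edgeIdealD K D) = dirEdgeExponents D := by
  rw [edgeIdealD_eq_monomialSpan, minGens_monomialSpan (isAntichain_dirEdgeExponents D)]

lemma le_one_of_mem_edgeExponents {G : SimpleGraph V} {a : V →₀ ℕ} (ha : a ∈ edgeExponents G)
    (x : V) : a x ≤ 1 := by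
  classical
  obtain ⟨i, j, hij, rfl⟩ := ha
  simp only [Finsupp.add_apply, Finsupp.single_apply]
  split_ifs with hi hj <;> simp_all

lemma support_single_add_single_eq_of_dir {D : WOGraph V} {i j : V} (hij : D.dir i j) :
    (Finsupp.single i 1 + Finsupp.single j (D.w j)).support =
      (Finsupp.single i 1 + Finsupp.single j 1).support := by
  classical
  have hne := (D.dir_adj hij).ne
  have hwj := Nat.one_le_iff_ne_zero.mp (D.one_le_w j)
  rw [Finsupp.support_single_add_single hne one_ne_zero hwj,
    Finsupp.support_single_add_single hne one_ne_zero one_ne_zero]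

lemma exists_edgeExponents_le {D : WOGraph V} {a : V →₀ ℕ} (ha : a ∈ dirEdgeExponents D) :
    ∃ b ∈ edgeExponents D.graph, b ≤ a := by
  obtain ⟨i, j, hij, rfl⟩ := ha
  exact ⟨_, ⟨i, j, D.dir_adj hij, rfl⟩, add_le_add_right (Finsupp.single_mono (D.one_le_w j)) _⟩

lemma exists_dirEdgeExponents_support_subset {D : WOGraph V} {b : V →₀ ℕ}
    (hb : b ∈ edgeExponents D.graph) : ∃ a ∈ dirEdgeExponents D, a.support ⊆ b.support := by
  obtain ⟨i, j, hij, rfl⟩ := hb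
  rcases D.adj_dir hij with hdir | hdir
  · exact ⟨_, ⟨i, j, hdir, rfl⟩, (support_single_add_single_eq_of_dir hdir).subset⟩
  · refine ⟨_, ⟨j, i, hdir, rfl⟩, ?_⟩
    rw [support_single_add_single_eq_of_dir hdir, add_comm]

end EdgeIdeals

theorem radical_matchingPower_edgeIdealD_general (V : Type) (K : Type) [Field K]
    (D : WOGraph V) (k : ℕ) :
    (matchingPower (edgeIdealD K D) k).radical = matchingPower (edgeIdealG K D.graph) k := by
  rw [matchingPower_eq_monomialSpan, matchingPower_eq_monomialSpan, minGens_edgeIdealD,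
    minGens_edgeIdealG]
  apply le_antisymm
  · calc _ ≤ (monomialSpan K (matchingSums (edgeExponents D.graph) k)).radical :=
          Ideal.radical_mono <| monomialSpan_le_monomialSpan fun _ hs =>
            exists_mem_matchingSums_of_forall_exists (· ≥ ·)
              (fun _ _ => Finsupp.support_mono)
              (fun _ _ h => Finset.sum_le_sum fun l _ => h l)
              (fun _ => exists_edgeExponents_le) hs
      _ = _ := radical_monomialSpan_of_le_one
          fun _ => le_one_of_mem_matchingSums fun _ => le_one_of_mem_edgeExponents
  · refine Ideal.span_le.mpr <| Set.image_subset_iff.mpr fun s hs => ?_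
    obtain ⟨t, ht, hts⟩ := exists_mem_matchingSums_of_forall_exists
      (fun b a => a.support ⊆ b.support) (fun _ _ h => h)
      (fun _ _ h => support_sum_subset_support_sum _ h)
      (fun _ => exists_dirEdgeExponents_support_subset) hs
    exact monomial_mem_radical_monomialSpan ht hts

/-- For a weighted oriented graph `D` with underlying graph `G` and
`1 ≤ k ≤ ν(G)`, the radical of `I(D)^{[k]}` equals `I(G)^{[k]}`. -/
theorem radical_matchingPower_edgeIdealD (V : Type) [Fintype V] (K : Type) [Field K]
    (D : WOGraph V) (k : ℕ) (hk1 : 1 ≤ k) (hk2 : k ≤ matchingNumber D.graph) :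
    (matchingPower (edgeIdealD K D) k).radical = matchingPower (edgeIdealG K D.graph) k :=
  radical_matchingPower_edgeIdealD_general V K D k

end MatchingPowers
end
end

section
/- Let D be a weighted oriented graph with underlying simple graph G, and suppose that every subgraph of G has at most one perfect matching. Let 1 ≤ k ≤ ν(G) and let u, v be minimal monomial generators of I(D)^{[k]}. If supp(u) = supp(v), then u = v. -/
open MvPolynomial CategoryTheory

noncomputable section

namespace MatchingPowers

variable {K : Type} [Field K] {σ : Type*}

variable {V : Type*}

/-!
A minimal generator of `I(D)^{[k]}` is a sum of exponent vectors `x_i x_j^{w_j}` of `k`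
directed edges with pairwise disjoint vertex sets, i.e. of a perfect matching of the subgraph
spanned by its support. Two generators with the same support give two perfect matchings of the
same subgraph, which coincide by hypothesis. Since each edge has only one orientation, a
common edge contributes the same monomial `x_i x_j^{w_j}` to both generators.
-/

theorem mem_of_mem_minGens_span_monomial {A : Set (σ →₀ ℕ)} {a : σ →₀ ℕ}
    (ha : a ∈ minGens (Ideal.span ((fun a => (monomial a (1 : K) : MvPolynomial σ K)) '' A))) :
    a ∈ A := by
  classical
  obtain ⟨hmem, hmin⟩ := ha
  rw [mem_ideal_span_monomial_image] at hmem
  obtain ⟨e, he, hle⟩ :=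
    hmem a (mem_support_iff.mpr (by rw [coeff_monomial, if_pos rfl]; exact one_ne_zero))
  exact hmin e (Ideal.subset_span ⟨e, he, rfl⟩) hle ▸ he

theorem matchingPower_eq_span_monomial_image (I : Ideal (MvPolynomial σ K)) (k : ℕ) :
    matchingPower I k = Ideal.span ((fun a => (monomial a (1 : K) : MvPolynomial σ K)) ''
      {a | ∃ u : Fin k → σ →₀ ℕ, (∀ i, u i ∈ minGens I) ∧
        (∀ i j, i ≠ j → Disjoint (u i).support (u j).support) ∧ a = ∑ i, u i}) := by
  rw [matchingPower]
  congr 1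
  ext f
  simp [and_assoc, eq_comm]

theorem exists_of_mem_minGens_matchingPower {I : Ideal (MvPolynomial σ K)} {k : ℕ}
    {a : σ →₀ ℕ} (ha : a ∈ minGens (matchingPower I k)) :
    ∃ u : Fin k → σ →₀ ℕ, (∀ i, u i ∈ minGens I) ∧
      (∀ i j, i ≠ j → Disjoint (u i).support (u j).support) ∧ a = ∑ i, u i := by
  rw [matchingPower_eq_span_monomial_image] at ha
  exact mem_of_mem_minGens_span_monomial ha

section DisjointSum

variable {ι α M : Type*} [Fintype ι] [AddCommMonoid M] {u : ι → α →₀ M}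

theorem coe_support_sum_of_disjoint
    (hu : ∀ i j, i ≠ j → Disjoint (u i).support (u j).support) :
    ↑(∑ i, u i).support = ⋃ i, (↑(u i).support : Set α) := by
  classical
  rw [Finsupp.support_sum_eq_biUnion _ hu]
  simp

theorem sum_apply_of_disjoint (hu : ∀ i j, i ≠ j → Disjoint (u i).support (u j).support)
    {i : ι} {x : α} (hx : x ∈ (u i).support) : (∑ j, u j) x = u i x := by
  rw [Finsupp.finsetSum_apply]
  refine Finset.sum_eq_single i (fun j _ hji => ?_) (by simp)
  exact Finsupp.notMem_support_iff.mp (Finset.disjoint_left.mp (hu i j hji.symm) hx)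

end DisjointSum

theorem isMatching_iSup_subgraphOfAdj {G : SimpleGraph V} {ι : Type*} {p q : ι → V}
    (h : ∀ i, G.Adj (p i) (q i))
    (hd : ∀ i j, i ≠ j → Disjoint ({p i, q i} : Set V) {p j, q j}) :
    (⨆ i, G.subgraphOfAdj (h i)).IsMatching :=
  .iSup (fun i => .subgraphOfAdj (h i)) fun i j hij => by
    simpa [(SimpleGraph.Subgraph.IsMatching.subgraphOfAdj _).support_eq_verts] using hd i j hij

theorem HasAtMostOnePerfectMatching.exists_sym2_eq {G : SimpleGraph V}
    (hG : HasAtMostOnePerfectMatching G) {ι κ : Type*} {p q : ι → V} {r t : κ → V}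
    (hpq : ∀ i, G.Adj (p i) (q i)) (hrt : ∀ j, G.Adj (r j) (t j))
    (hpqd : ∀ i i', i ≠ i' → Disjoint ({p i, q i} : Set V) {p i', q i'})
    (hrtd : ∀ j j', j ≠ j' → Disjoint ({r j, t j} : Set V) {r j', t j'})
    (hverts : ⋃ i, ({p i, q i} : Set V) = ⋃ j, {r j, t j}) (i : ι) :
    ∃ j, s(p i, q i) = s(r j, t j) := by
  set M₁ := ⨆ i, G.subgraphOfAdj (hpq i)
  set M₂ := ⨆ j, G.subgraphOfAdj (hrt j)
  have hM : M₁ = M₂ := by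
    have hverts' : M₁.verts = M₂.verts := by
      simpa [M₁, M₂, SimpleGraph.Subgraph.verts_iSup] using hverts
    exact hG (M₁ ⊔ M₂) M₁ M₂ le_sup_left (by simp [hverts'])
      (isMatching_iSup_subgraphOfAdj hpq hpqd) le_sup_right (by simp [hverts'])
      (isMatching_iSup_subgraphOfAdj hrt hrtd)
  have hadj : M₂.Adj (p i) (q i) :=
    hM ▸ SimpleGraph.Subgraph.iSup_adj.mpr ⟨i, SimpleGraph.subgraphOfAdj_adj_self (hpq i)⟩
  obtain ⟨j, hj⟩ := SimpleGraph.Subgraph.iSup_adj.mp hadj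
  exact ⟨j, Eq.symm hj⟩

namespace WOGraph

variable (D : WOGraph V)

def edgeExponent (i j : V) : V →₀ ℕ :=
  Finsupp.single i 1 + Finsupp.single j (D.w j)

variable {D}

theorem eq_and_eq_of_dir_of_dir {p q r t : V} (hpq : D.dir p q) (hrt : D.dir r t)
    (h : s(p, q) = s(r, t)) : p = r ∧ q = t := by
  rcases Sym2.eq_iff.mp h with h | ⟨rfl, rfl⟩
  · exact h
  · exact (D.not_both hpq hrt).elim

theorem coe_support_edgeExponent {i j : V} (hij : D.dir i j) :
    ↑(D.edgeExponent i j).support = ({i, j} : Set V) := by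
  classical
  have hne : i ≠ j := (D.dir_adj hij).ne
  have hw : D.w j ≠ 0 := Nat.one_le_iff_ne_zero.mp (D.one_le_w j)
  rw [edgeExponent, Finsupp.support_add_eq, Finsupp.support_single _ one_ne_zero,
    Finsupp.support_single _ hw]
  · simp
  · simpa [Finsupp.support_single _ hw] using hne

theorem disjoint_support_edgeExponent_iff {p q r t : V} (hpq : D.dir p q) (hrt : D.dir r t) :
    Disjoint (D.edgeExponent p q).support (D.edgeExponent r t).support ↔
      Disjoint ({p, q} : Set V) {r, t} := by
  rw [← Finset.disjoint_coe, coe_support_edgeExponent hpq, coe_support_edgeExponent hrt]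

variable {k : ℕ} {p q : Fin k → V}

theorem coe_support_sum_edgeExponent (hpq : ∀ i, D.dir (p i) (q i))
    (hpqd : ∀ i j, i ≠ j → Disjoint ({p i, q i} : Set V) {p j, q j}) :
    ↑(∑ j, D.edgeExponent (p j) (q j)).support = ⋃ i, ({p i, q i} : Set V) := by
  rw [coe_support_sum_of_disjoint fun i j hij =>
    (disjoint_support_edgeExponent_iff (hpq i) (hpq j)).mpr (hpqd i j hij)]
  simp only [coe_support_edgeExponent (hpq _)]

theorem sum_edgeExponent_apply (hpq : ∀ i, D.dir (p i) (q i))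
    (hpqd : ∀ i j, i ≠ j → Disjoint ({p i, q i} : Set V) {p j, q j}) {i : Fin k} {x : V}
    (hx : x ∈ ({p i, q i} : Set V)) :
    (∑ j, D.edgeExponent (p j) (q j)) x = D.edgeExponent (p i) (q i) x := by
  refine sum_apply_of_disjoint (fun i j hij => ?_) ?_
  · exact (disjoint_support_edgeExponent_iff (hpq i) (hpq j)).mpr (hpqd i j hij)
  · rwa [← Finset.mem_coe, coe_support_edgeExponent (hpq i)]

end WOGraph

theorem edgeIdealD_eq_span_monomial_image (D : WOGraph V) :
    edgeIdealD K D = Ideal.span ((fun a => (monomial a (1 : K) : MvPolynomial V K)) ''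
      {a | ∃ i j, D.dir i j ∧ a = D.edgeExponent i j}) := by
  rw [edgeIdealD]
  congr 1
  ext f
  simp [WOGraph.edgeExponent, eq_comm]

theorem exists_dir_of_mem_minGens_edgeIdealD {D : WOGraph V} {u : V →₀ ℕ}
    (hu : u ∈ minGens (edgeIdealD K D)) : ∃ i j, D.dir i j ∧ u = D.edgeExponent i j := by
  rw [edgeIdealD_eq_span_monomial_image] at hu
  exact mem_of_mem_minGens_span_monomial hu

theorem exists_dir_of_mem_minGens_matchingPower_edgeIdealD {D : WOGraph V} {k : ℕ}
    {a : V →₀ ℕ} (ha : a ∈ minGens (matchingPower (edgeIdealD K D) k)) :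
    ∃ p q : Fin k → V, (∀ i, D.dir (p i) (q i)) ∧
      (∀ i j, i ≠ j → Disjoint ({p i, q i} : Set V) {p j, q j}) ∧
      a = ∑ i, D.edgeExponent (p i) (q i) := by
  obtain ⟨u, hu, hud, rfl⟩ := exists_of_mem_minGens_matchingPower ha
  choose p q hpq hpqu using fun i => exists_dir_of_mem_minGens_edgeIdealD (hu i)
  refine ⟨p, q, hpq, fun i j hij => ?_, Finset.sum_congr rfl fun i _ => hpqu i⟩
  rw [← WOGraph.disjoint_support_edgeExponent_iff (hpq i) (hpq j), ← hpqu i, ← hpqu j]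
  exact hud i j hij

theorem minGens_matchingPower_support_injective_general (V : Type) (K : Type) [Field K]
    (D : WOGraph V) (hpm : HasAtMostOnePerfectMatching D.graph)
    (k : ℕ)
    (a b : V →₀ ℕ)
    (ha : a ∈ minGens (matchingPower (edgeIdealD K D) k))
    (hb : b ∈ minGens (matchingPower (edgeIdealD K D) k))
    (hsupp : a.support = b.support) :
    a = b := by
  obtain ⟨p, q, hpq, hpqd, rfl⟩ := exists_dir_of_mem_minGens_matchingPower_edgeIdealD ha
  obtain ⟨r, t, hrt, hrtd, rfl⟩ := exists_dir_of_mem_minGens_matchingPower_edgeIdealD hb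
  have hverts : ⋃ i, ({p i, q i} : Set V) = ⋃ j, {r j, t j} := by
    rw [← D.coe_support_sum_edgeExponent hpq hpqd, ← D.coe_support_sum_edgeExponent hrt hrtd,
      hsupp]
  ext x
  by_cases hx : x ∈ ⋃ i, ({p i, q i} : Set V)
  · obtain ⟨i, hxi⟩ := Set.mem_iUnion.mp hx
    obtain ⟨j, hij⟩ := hpm.exists_sym2_eq (fun i => D.dir_adj (hpq i))
      (fun j => D.dir_adj (hrt j)) hpqd hrtd hverts i
    obtain ⟨hpr, hqt⟩ := D.eq_and_eq_of_dir_of_dir (hpq i) (hrt j) hij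
    rw [D.sum_edgeExponent_apply hpq hpqd hxi, hpr, hqt,
      D.sum_edgeExponent_apply hrt hrtd (hpr ▸ hqt ▸ hxi)]
  · rw [← D.coe_support_sum_edgeExponent hpq hpqd, Finset.mem_coe] at hx
    rw [Finsupp.notMem_support_iff.mp hx, Finsupp.notMem_support_iff.mp (hsupp ▸ hx)]

/-- If every subgraph of the underlying graph of `D` has at most one
perfect matching and `1 ≤ k ≤ ν(G)`, then minimal generators of `I(D)^{[k]}` with equal
supports are equal. -/
theorem minGens_matchingPower_support_injective (V : Type) [Fintype V] (K : Type) [Field K]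
    (D : WOGraph V) (hpm : HasAtMostOnePerfectMatching D.graph)
    (k : ℕ) (hk1 : 1 ≤ k) (hk2 : k ≤ matchingNumber D.graph)
    (a b : V →₀ ℕ)
    (ha : a ∈ minGens (matchingPower (edgeIdealD K D) k))
    (hb : b ∈ minGens (matchingPower (edgeIdealD K D) k))
    (hsupp : a.support = b.support) :
    a = b :=
  minGens_matchingPower_support_injective_general V K D hpm k a b ha hb hsupp

end MatchingPowers
end
end

section
/- Let D be a weighted oriented graph and 1 ≤ k ≤ ν(I(D)). Let u, v be minimal monomial generators of I(D)^{[k]} such that supp(u) ≠ supp(v) and deg(lcm(u,v)) = deg(u) + 1 = deg(v) + 1. Then there exist variables z_1 ∉ supp(u) and z_2 ∉ supp(v) such that v = u z_1 / z_2, deg_{z_1}(v) = 1 and deg_{z_2}(u) = 1. -/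
open MvPolynomial CategoryTheory

noncomputable section

namespace MatchingPowers

variable {K : Type} [Field K] {σ : Type*}

variable {V : Type*}

/-!
A minimal generator of `I(D)^{[k]}` is a product of `k` edge monomials `x_i x_j^{w_j}` with
pairwise disjoint supports, so its support has exactly `2k` elements. Writing `c = gcd(u, v)`,
the degree condition forces `u = c x_{z₂}` and `v = c x_{z₁}` with `z₁ ≠ z₂`; since the supports
`{z₂} ∪ supp c` and `{z₁} ∪ supp c` have the same size but differ, neither `z₁` nor `z₂` lies in
`supp c`.
-/

open scoped Finset

theorem notMem_of_card_insert_eq_of_insert_ne {α : Type*} [DecidableEq α] {s : Finset α}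
    {x y : α} (hcard : #(insert x s) = #(insert y s)) (hne : insert x s ≠ insert y s) :
    x ∉ s ∧ y ∉ s := by
  have key : ∀ {x y : α}, #(insert x s) = #(insert y s) → insert x s ≠ insert y s → x ∉ s := by
    intro x y hcard hne hx
    rw [Finset.insert_eq_of_mem hx] at hcard hne
    have hy : y ∉ s := fun hy => hne (Finset.insert_eq_of_mem hy).symm
    rw [Finset.card_insert_of_notMem hy] at hcard
    omega
  exact ⟨key hcard hne, key hcard.symm hne.symm⟩

theorem monomial_mem_of_mem_minGens_span {S : Set (MvPolynomial σ K)}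
    (hS : S ⊆ Set.range fun a => monomial a (1 : K)) {c : σ →₀ ℕ}
    (hc : c ∈ minGens (Ideal.span S)) : monomial c (1 : K) ∈ S := by
  obtain ⟨hmem, hmin⟩ := hc
  rw [← Set.image_preimage_eq_of_subset hS, mem_ideal_span_monomial_image] at hmem
  obtain ⟨s, hs, hsc⟩ := hmem c (by classical simp)
  rwa [← hmin s (Ideal.subset_span hs) hsc]

theorem card_support_of_mem_minGens_edgeIdealD {D : WOGraph V} {c : V →₀ ℕ}
    (hc : c ∈ minGens (edgeIdealD K D)) : #c.support = 2 := by
  classical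
  obtain ⟨i, j, hij, hc⟩ := monomial_mem_of_mem_minGens_span
    (by rintro _ ⟨i, j, -, rfl⟩; exact ⟨_, rfl⟩) hc
  rw [monomial_left_inj one_ne_zero] at hc
  have hne : i ≠ j := (D.dir_adj hij).ne
  rw [hc, Finsupp.support_add_eq_union, Finsupp.support_single _ one_ne_zero,
    Finsupp.support_single _ (Nat.one_le_iff_ne_zero.mp (D.one_le_w j)), ← Finset.insert_eq,
    Finset.card_pair hne]

theorem card_support_of_mem_minGens_matchingPower {I : Ideal (MvPolynomial σ K)} {m : ℕ}
    (hI : ∀ c ∈ minGens I, #c.support = m) {k : ℕ} {c : σ →₀ ℕ}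
    (hc : c ∈ minGens (matchingPower I k)) : #c.support = k * m := by
  classical
  obtain ⟨u, hu, hdisj, hc⟩ := monomial_mem_of_mem_minGens_span
    (by rintro _ ⟨u, -, -, rfl⟩; exact ⟨_, rfl⟩) hc
  rw [monomial_left_inj one_ne_zero] at hc
  rw [hc, Finsupp.support_sum_eq_biUnion _ hdisj, Finset.card_biUnion fun i _ j _ => hdisj i j,
    Finset.sum_congr rfl fun i _ => hI _ (hu i)]
  simp

theorem degF_eq_degree (a : σ →₀ ℕ) : degF a = a.degree := rfl

theorem sup_eq_add_tsub (a b : σ →₀ ℕ) : a ⊔ b = a + (b - a) := by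
  ext i
  simp only [Finsupp.sup_apply, Finsupp.add_apply, Finsupp.tsub_apply]
  omega

theorem inf_add_tsub (a b : σ →₀ ℕ) : a ⊓ b + (a - b) = a := by
  ext i
  simp only [Finsupp.inf_apply, Finsupp.add_apply, Finsupp.tsub_apply]
  omega

section Exchange

variable {a b : σ →₀ ℕ}

theorem exists_tsub_eq_single_of_degF_sup (h : degF (a ⊔ b) = degF a + 1) :
    ∃ z, b - a = Finsupp.single z 1 := by
  rw [degF_eq_degree, degF_eq_degree, sup_eq_add_tsub, map_add, add_right_inj] at h
  exact (Finsupp.sum_eq_one_iff _).mp h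

theorem exists_eq_inf_add_single_of_degF_sup (hdega : degF (a ⊔ b) = degF a + 1)
    (hdegb : degF (a ⊔ b) = degF b + 1) :
    ∃ z₁ z₂, z₁ ≠ z₂ ∧ a = a ⊓ b + Finsupp.single z₂ 1 ∧ b = a ⊓ b + Finsupp.single z₁ 1 := by
  obtain ⟨z₁, hz₁⟩ := exists_tsub_eq_single_of_degF_sup hdega
  obtain ⟨z₂, hz₂⟩ := exists_tsub_eq_single_of_degF_sup (sup_comm a b ▸ hdegb)
  refine ⟨z₁, z₂, ?_, by rw [← hz₂, inf_add_tsub], by rw [← hz₁, inf_comm, inf_add_tsub]⟩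
  rintro rfl
  have h₁ := DFunLike.congr_fun hz₁ z₁
  have h₂ := DFunLike.congr_fun hz₂ z₁
  simp only [Finsupp.tsub_apply, Finsupp.single_eq_same] at h₁ h₂
  omega

theorem support_add_single_one [DecidableEq σ] (c : σ →₀ ℕ) (z : σ) :
    (c + Finsupp.single z 1).support = insert z c.support := by
  rw [Finsupp.support_add_eq_union, Finsupp.support_single _ one_ne_zero,
    Finset.union_comm, Finset.insert_eq]

theorem exists_exchange_of_degF_sup_eq_succ (hcard : #a.support = #b.support)
    (hsupp : a.support ≠ b.support) (hdega : degF (a ⊔ b) = degF a + 1)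
    (hdegb : degF (a ⊔ b) = degF b + 1) :
    ∃ z₁ z₂ : σ, z₁ ∉ a.support ∧ z₂ ∉ b.support ∧
      b + Finsupp.single z₂ 1 = a + Finsupp.single z₁ 1 ∧ b z₁ = 1 ∧ a z₂ = 1 := by
  classical
  obtain ⟨z₁, z₂, hne, ha, hb⟩ := exists_eq_inf_add_single_of_degF_sup hdega hdegb
  set c := a ⊓ b
  rw [ha, hb] at hcard hsupp ⊢
  simp only [support_add_single_one] at hcard hsupp
  obtain ⟨hz₂, hz₁⟩ := notMem_of_card_insert_eq_of_insert_ne hcard hsupp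
  refine ⟨z₁, z₂, ?_, ?_, add_right_comm _ _ _, ?_, ?_⟩ <;>
    simp [support_add_single_one, hne, hne.symm,
      Finsupp.notMem_support_iff.mp hz₁, Finsupp.notMem_support_iff.mp hz₂, hz₁, hz₂]

end Exchange

theorem minGens_matchingPower_lcm_deg_succ_general (V : Type) (K : Type) [Field K]
    (D : WOGraph V) (k : ℕ)
    (a b : V →₀ ℕ)
    (ha : a ∈ minGens (matchingPower (edgeIdealD K D) k))
    (hb : b ∈ minGens (matchingPower (edgeIdealD K D) k))
    (hsupp : a.support ≠ b.support)
    (hdega : degF (a ⊔ b) = degF a + 1) (hdegb : degF (a ⊔ b) = degF b + 1) :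
    ∃ z₁ z₂ : V, z₁ ∉ a.support ∧ z₂ ∉ b.support ∧
      b + Finsupp.single z₂ 1 = a + Finsupp.single z₁ 1 ∧ b z₁ = 1 ∧ a z₂ = 1 := by
  have hcard (c : V →₀ ℕ) (hc : c ∈ minGens (matchingPower (edgeIdealD K D) k)) :
      #c.support = k * 2 :=
    card_support_of_mem_minGens_matchingPower (fun _ => card_support_of_mem_minGens_edgeIdealD) hc
  exact exists_exchange_of_degF_sup_eq_succ (by rw [hcard a ha, hcard b hb]) hsupp hdega hdegb

/-- Let `u, v` be minimal generators of `I(D)^{[k]}` with different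
supports and `deg lcm(u,v) = deg u + 1 = deg v + 1`. Then there are variables `z₁ ∉ supp u`
and `z₂ ∉ supp v` with `v = u z₁ / z₂`, `deg_{z₁} v = 1` and `deg_{z₂} u = 1`. -/
theorem minGens_matchingPower_lcm_deg_succ (V : Type) [Fintype V] (K : Type) [Field K]
    (D : WOGraph V) (k : ℕ) (hk1 : 1 ≤ k) (hk2 : k ≤ monomialGrade (edgeIdealD K D))
    (a b : V →₀ ℕ)
    (ha : a ∈ minGens (matchingPower (edgeIdealD K D) k))
    (hb : b ∈ minGens (matchingPower (edgeIdealD K D) k))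
    (hsupp : a.support ≠ b.support)
    (hdega : degF (a ⊔ b) = degF a + 1) (hdegb : degF (a ⊔ b) = degF b + 1) :
    ∃ z₁ z₂ : V, z₁ ∉ a.support ∧ z₂ ∉ b.support ∧
      b + Finsupp.single z₂ 1 = a + Finsupp.single z₁ 1 ∧ b z₁ = 1 ∧ a z₂ = 1 :=
  minGens_matchingPower_lcm_deg_succ_general V K D k a b ha hb hsupp hdega hdegb

end MatchingPowers
end
end

section
/- Let D be a weighted oriented graph with underlying simple graph G such that every subgraph of G has at most one perfect matching, let 1 ≤ k ≤ ν(G), and suppose I(D)^{[k]} satisfies the Bigdeli–Herzog–Zheng connectedness criterion for being linearly related: for all minimal generators u, v of I(D)^{[k]} there is a path in the graph G^{(u,v)} connecting u and v. If u is a minimal generator of I(D)^{[k]} and x is a variable with deg_x(u) = r > 1, then deg_x(v) = r for every minimal generator v of I(D)^{[k]}. -/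
open MvPolynomial CategoryTheory

noncomputable section

namespace MatchingPowers

variable {K : Type} [Field K] {σ : Type*}

variable {V : Type*}

/-- The Bigdeli–Herzog–Zheng criterion for a monomial ideal `J` to be linearly related:
any two minimal monomial generators `u, v` of `J` are connected by a path in the graph
`G_J^{(u,v)}` whose vertices are the minimal generators of `J` dividing `lcm(u,v)` and whose
edges join generators `p, q` with `deg lcm(p,q) = deg p + 1 = deg q + 1`. -/
def lrCriterion (J : Ideal (MvPolynomial σ K)) : Prop :=
  ∀ a ∈ minGens J, ∀ b ∈ minGens J,
    Relation.ReflTransGen (fun p q =>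
      p ∈ minGens J ∧ q ∈ minGens J ∧ p ≤ a ⊔ b ∧ q ≤ a ⊔ b ∧
      degF (p ⊔ q) = degF p + 1 ∧ degF (p ⊔ q) = degF q + 1) a b

/-!
A minimal generator `u` of `I(D)^{[k]}` is the product of the monomials `x_s x_t^{w_t}` over the
edges `s → t` of a directed `k`-matching, so `deg_x u ∈ {0, 1, w_x}`. It therefore suffices to
show that `deg_x` does not drop from `r > 1` along an edge `u — v` of a path in `G^{(u,v)}`. There
`lcm(u,v) = v · x_z`, so `deg_x u ≤ deg_x v + 1`, and the only possible drop is to `deg_x v = 1`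
with `z = x`. Then `supp u ⊆ supp v`, and both supports have `2k` elements, so the underlying
matchings of `u` and `v` are perfect matchings of the same subgraph of `G`. They coincide, and
since the orientation determines each directed edge from the undirected one, `u = v`.
-/

lemma exists_eq_add_single_of_degF_eq_succ {q c : σ →₀ ℕ} (hqc : q ≤ c)
    (hdeg : degF c = degF q + 1) : ∃ z, c = q + Finsupp.single z 1 := by
  set d := c - q
  have hd : d.degree = 1 := by
    have h := map_add Finsupp.degree d q
    rw [tsub_add_cancel_of_le hqc] at h
    change c.degree = q.degree + 1 at hdeg
    omega
  have hd0 : d ≠ 0 := by rintro h; simp [h] at hd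
  obtain ⟨z, hz⟩ := Finsupp.support_nonempty_iff.mpr hd0
  have hzd : Finsupp.single z 1 ≤ d := by
    simpa [Finsupp.single_le_iff, Nat.one_le_iff_ne_zero] using hz
  have hrest : (d - Finsupp.single z 1).degree = 0 := by
    have h := map_add Finsupp.degree (d - Finsupp.single z 1) (Finsupp.single z 1)
    rw [tsub_add_cancel_of_le hzd, Finsupp.degree_single] at h
    omega
  rw [Finsupp.degree_eq_zero_iff, tsub_eq_zero_iff_le] at hrest
  refine ⟨z, ?_⟩
  rw [← le_antisymm hrest hzd]
  exact (add_tsub_cancel_of_le hqc).symm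

lemma support_subset_of_le_add_single {p q : σ →₀ ℕ} {z : σ}
    (hpq : p ≤ q + Finsupp.single z 1) (hz : z ∈ q.support) : p.support ⊆ q.support := by
  intro v hv
  rcases eq_or_ne v z with rfl | hvz
  · exact hz
  · have h := hpq v
    simp only [Finsupp.add_apply, Finsupp.single_eq_of_ne' hvz.symm, add_zero] at h
    simp only [Finsupp.mem_support_iff] at hv ⊢
    omega

section PairwiseDisjoint

variable {ι : Type*} [Fintype ι] {u : ι → σ →₀ ℕ}

lemma sum_apply_of_mem_support (hu : Pairwise fun i j => Disjoint (u i).support (u j).support)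
    {i : ι} {v : σ} (hv : v ∈ (u i).support) :
    (∑ j, u j) v = u i v := by
  rw [Finsupp.finsetSum_apply]
  refine Finset.sum_eq_single i (fun j _ hji => ?_) (by simp)
  exact Finsupp.notMem_support_iff.mp fun hvj => Finset.disjoint_left.mp (hu hji) hvj hv

lemma sum_le_of_pairwise_disjoint
    (hu : Pairwise fun i j => Disjoint (u i).support (u j).support) {c : σ →₀ ℕ}
    (h : ∀ i, u i ≤ c) : ∑ i, u i ≤ c := by
  classical
  intro v
  by_cases hv : v ∈ (∑ i, u i).support
  · obtain ⟨i, -, hi⟩ := Finset.mem_biUnion.mp (Finsupp.support_finsetSum hv)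
    rw [sum_apply_of_mem_support hu hi]
    exact h i v
  · simp [Finsupp.notMem_support_iff.mp hv]

end PairwiseDisjoint

lemma mem_of_mem_minGens_span {S : Set (MvPolynomial σ K)}
    (hS : S ⊆ Set.range fun g => monomial g 1) {a : σ →₀ ℕ}
    (ha : a ∈ minGens (Ideal.span S)) :
    monomial a 1 ∈ S := by
  classical
  have hmem := ha.1
  rw [← Set.image_preimage_eq_of_subset hS, mem_ideal_span_monomial_image] at hmem
  obtain ⟨g, hgS, hga⟩ := hmem a (by simp)
  rwa [ha.2 g (Ideal.subset_span hgS) hga] at hgS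

lemma exists_sum_of_mem_minGens_matchingPower {I : Ideal (MvPolynomial σ K)} {k : ℕ}
    {a : σ →₀ ℕ} (ha : a ∈ minGens (matchingPower I k)) :
    ∃ u : Fin k → σ →₀ ℕ, (∀ i, u i ∈ minGens I) ∧
      (Pairwise fun i j => Disjoint (u i).support (u j).support) ∧ a = ∑ i, u i := by
  obtain ⟨u, hu, hdisj, hau⟩ :=
    mem_of_mem_minGens_span (by rintro _ ⟨u, -, -, rfl⟩; simp) ha
  exact ⟨u, hu, hdisj, monomial_left_injective one_ne_zero hau⟩

def edgeExp (D : WOGraph V) (s t : V) : V →₀ ℕ :=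
  Finsupp.single s 1 + Finsupp.single t (D.w t)

lemma exists_edgeExp_of_mem_minGens {D : WOGraph V} {a : V →₀ ℕ}
    (ha : a ∈ minGens (edgeIdealD K D)) : ∃ s t, D.dir s t ∧ a = edgeExp D s t := by
  obtain ⟨s, t, hst, hat⟩ := mem_of_mem_minGens_span (by rintro _ ⟨s, t, -, rfl⟩; simp) ha
  exact ⟨s, t, hst, monomial_left_injective one_ne_zero hat⟩

section EdgeExp

variable {D : WOGraph V} {s t v : V}

lemma mem_support_edgeExp : v ∈ (edgeExp D s t).support ↔ v = s ∨ v = t := by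
  classical
  have := D.one_le_w t
  simp only [edgeExp, Finsupp.mem_support_iff, Finsupp.add_apply, Finsupp.single_apply]
  split_ifs <;> grind

lemma coe_support_edgeExp : ((edgeExp D s t).support : Set V) = {s, t} := by
  ext v
  simp only [Finset.mem_coe, mem_support_edgeExp, Set.mem_insert_iff, Set.mem_singleton_iff]

lemma edgeExp_apply_left (hst : D.dir s t) : edgeExp D s t s = 1 := by
  simp [edgeExp, Finsupp.single_eq_of_ne' (D.dir_adj hst).ne.symm]

lemma edgeExp_apply_right (hst : D.dir s t) : edgeExp D s t t = D.w t := by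
  simp [edgeExp, Finsupp.single_eq_of_ne' (D.dir_adj hst).ne]

lemma card_support_edgeExp (hst : D.dir s t) : (edgeExp D s t).support.card = 2 := by
  classical
  rw [← Finset.card_pair (D.dir_adj hst).ne]
  congr 1
  exact Finset.coe_injective (by rw [coe_support_edgeExp, Finset.coe_pair])

end EdgeExp

structure IsDirectedMatching (D : WOGraph V) {k : ℕ} (s t : Fin k → V) : Prop where
  dir : ∀ i, D.dir (s i) (t i)
  disjoint : Pairwise fun i j =>
    Disjoint (edgeExp D (s i) (t i)).support (edgeExp D (s j) (t j)).support

def matchingExp (D : WOGraph V) {k : ℕ} (s t : Fin k → V) : V →₀ ℕ :=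
  ∑ i, edgeExp D (s i) (t i)

lemma exists_isDirectedMatching_of_mem_minGens {D : WOGraph V} {k : ℕ} {a : V →₀ ℕ}
    (ha : a ∈ minGens (matchingPower (edgeIdealD K D) k)) :
    ∃ s t : Fin k → V, IsDirectedMatching D s t ∧ a = matchingExp D s t := by
  obtain ⟨u, hu, hdisj, rfl⟩ := exists_sum_of_mem_minGens_matchingPower ha
  choose s t hst hut using fun i => exists_edgeExp_of_mem_minGens (hu i)
  obtain rfl : u = fun i => edgeExp D (s i) (t i) := funext hut
  exact ⟨s, t, ⟨hst, hdisj⟩, rfl⟩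

section DirectedMatching

variable {D : WOGraph V} {k : ℕ} {s t s' t' : Fin k → V}

lemma matchingExp_apply_eq_zero_or_one_or_w (hd : IsDirectedMatching D s t) (v : V) :
    matchingExp D s t v = 0 ∨ matchingExp D s t v = 1 ∨ matchingExp D s t v = D.w v := by
  classical
  by_cases hv : v ∈ (matchingExp D s t).support
  · obtain ⟨i, -, hi⟩ := Finset.mem_biUnion.mp (Finsupp.support_finsetSum hv)
    rw [matchingExp, sum_apply_of_mem_support hd.disjoint hi]
    rcases mem_support_edgeExp.mp hi with rfl | rfl
    · exact Or.inr (Or.inl (edgeExp_apply_left (hd.dir i)))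
    · exact Or.inr (Or.inr (edgeExp_apply_right (hd.dir i)))
  · exact Or.inl (Finsupp.notMem_support_iff.mp hv)

lemma card_support_matchingExp (hd : IsDirectedMatching D s t) :
    (matchingExp D s t).support.card = 2 * k := by
  classical
  rw [matchingExp, Finsupp.support_sum_eq_biUnion _ hd.disjoint,
    Finset.card_biUnion fun i _ j _ hij => hd.disjoint hij]
  simp [card_support_edgeExp (hd.dir _), mul_comm]

def matchingSubgraph (hd : IsDirectedMatching D s t) : D.graph.Subgraph :=
  ⨆ i, D.graph.subgraphOfAdj (D.dir_adj (hd.dir i))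

lemma matchingSubgraph_verts (hd : IsDirectedMatching D s t) :
    (matchingSubgraph hd).verts = (matchingExp D s t).support := by
  classical
  rw [matchingSubgraph, SimpleGraph.Subgraph.verts_iSup, matchingExp,
    Finsupp.support_sum_eq_biUnion _ hd.disjoint, Finset.coe_biUnion]
  simp [coe_support_edgeExp]

lemma isMatching_matchingSubgraph (hd : IsDirectedMatching D s t) :
    (matchingSubgraph hd).IsMatching :=
  .iSup (fun _ => .subgraphOfAdj _) fun i j hij => by
    dsimp only
    rw [SimpleGraph.support_subgraphOfAdj, SimpleGraph.support_subgraphOfAdj,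
      ← coe_support_edgeExp (D := D), ← coe_support_edgeExp (D := D)]
    exact Finset.disjoint_coe.mpr (hd.disjoint hij)

lemma matchingSubgraph_adj (hd : IsDirectedMatching D s t) (i : Fin k) :
    (matchingSubgraph hd).Adj (s i) (t i) :=
  SimpleGraph.Subgraph.iSup_adj.mpr ⟨i, SimpleGraph.subgraphOfAdj_adj_self _⟩

lemma matchingExp_mono (hd : IsDirectedMatching D s t) (hd' : IsDirectedMatching D s' t')
    (hle : matchingSubgraph hd ≤ matchingSubgraph hd') :
    matchingExp D s t ≤ matchingExp D s' t' := by
  refine sum_le_of_pairwise_disjoint hd.disjoint fun i => ?_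
  obtain ⟨j, hj⟩ := SimpleGraph.Subgraph.iSup_adj.mp (hle.2 (matchingSubgraph_adj hd i))
  rw [SimpleGraph.subgraphOfAdj_adj, Sym2.eq_iff] at hj
  rcases hj with ⟨hs, ht⟩ | ⟨hs, ht⟩
  · rw [← hs, ← ht]
    exact Finset.single_le_sum (f := fun j => edgeExp D (s' j) (t' j))
      (fun _ _ => zero_le) (Finset.mem_univ j)
  · have hrev : D.dir (t i) (s i) := hs ▸ ht ▸ hd'.dir j
    exact absurd hrev (D.not_both (hd.dir i))

lemma matchingExp_eq_of_support_eq (hpm : HasAtMostOnePerfectMatching D.graph)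
    (hd : IsDirectedMatching D s t) (hd' : IsDirectedMatching D s' t')
    (hsupp : (matchingExp D s t).support = (matchingExp D s' t').support) :
    matchingExp D s t = matchingExp D s' t' := by
  have hverts : (matchingSubgraph hd).verts = (matchingSubgraph hd').verts := by
    rw [matchingSubgraph_verts, matchingSubgraph_verts, hsupp]
  have hM : matchingSubgraph hd = matchingSubgraph hd' :=
    hpm _ _ _ le_sup_left (by rw [SimpleGraph.Subgraph.verts_sup, hverts, Set.union_self])
      (isMatching_matchingSubgraph hd) le_sup_right
      (by rw [SimpleGraph.Subgraph.verts_sup, hverts, Set.union_self])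
      (isMatching_matchingSubgraph hd')
  exact le_antisymm (matchingExp_mono hd hd' hM.le) (matchingExp_mono hd' hd hM.ge)

end DirectedMatching

lemma apply_eq_of_degF_sup_eq_succ {D : WOGraph V} (hpm : HasAtMostOnePerfectMatching D.graph)
    {k : ℕ} {p q : V →₀ ℕ} (hp : p ∈ minGens (matchingPower (edgeIdealD K D) k))
    (hq : q ∈ minGens (matchingPower (edgeIdealD K D) k)) (hpq : degF (p ⊔ q) = degF q + 1)
    {x : V} (hx : 1 < p x) : q x = p x := by
  classical
  obtain ⟨s, t, hd, rfl⟩ := exists_isDirectedMatching_of_mem_minGens hp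
  obtain ⟨s', t', hd', rfl⟩ := exists_isDirectedMatching_of_mem_minGens hq
  obtain ⟨z, hz⟩ := exists_eq_add_single_of_degF_eq_succ le_sup_right hpq
  have hle : matchingExp D s t ≤ matchingExp D s' t' + Finsupp.single z 1 := hz ▸ le_sup_left
  have hlex : matchingExp D s t x ≤ matchingExp D s' t' x + Finsupp.single z 1 x := hle x
  have hsingle : Finsupp.single z 1 x ≤ 1 := by
    rw [Finsupp.single_apply]; split_ifs <;> omega
  rcases matchingExp_apply_eq_zero_or_one_or_w hd' x with hq0 | hq1 | hqw
  · omega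
  · have hzx : z = x := by
      by_contra hne
      rw [Finsupp.single_eq_of_ne' hne] at hlex
      omega
    have hsub := support_subset_of_le_add_single hle (by simp [hzx, hq1])
    have hcard := (card_support_matchingExp hd).trans (card_support_matchingExp hd').symm
    rw [matchingExp_eq_of_support_eq hpm hd hd' (Finset.eq_of_subset_of_card_le hsub hcard.ge)]
  · rcases matchingExp_apply_eq_zero_or_one_or_w hd x with hp0 | hp1 | hpw <;> omega

theorem minGens_matchingPower_deg_const_general (V : Type) (K : Type) [Field K]
    (D : WOGraph V) (hpm : HasAtMostOnePerfectMatching D.graph)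
    (k : ℕ)
    (hlr : lrCriterion (matchingPower (edgeIdealD K D) k))
    (a : V →₀ ℕ) (ha : a ∈ minGens (matchingPower (edgeIdealD K D) k))
    (x : V) (r : ℕ) (hx : a x = r) (hr : 1 < r) :
    ∀ b ∈ minGens (matchingPower (edgeIdealD K D) k), b x = r := by
  intro b hb
  have hpath : Relation.ReflTransGen (fun p q =>
      p ∈ minGens (matchingPower (edgeIdealD K D) k) ∧
      q ∈ minGens (matchingPower (edgeIdealD K D) k) ∧ degF (p ⊔ q) = degF q + 1) a b :=
    Relation.ReflTransGen.mono (fun _ _ h => ⟨h.1, h.2.1, h.2.2.2.2.2⟩) _ _ (hlr a ha b hb)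
  clear hb
  induction hpath with
  | refl => exact hx
  | tail _ hpq ih =>
    exact (apply_eq_of_degF_sup_eq_succ hpm hpq.1 hpq.2.1 hpq.2.2 (ih ▸ hr)).trans ih

/-- Suppose every subgraph of the underlying graph of `D` has at most one
perfect matching and `I(D)^{[k]}` satisfies the Bigdeli–Herzog–Zheng connectedness criterion.
If some minimal generator of `I(D)^{[k]}` has `x`-degree `r > 1`, then every minimal
generator of `I(D)^{[k]}` has `x`-degree `r`. -/
theorem minGens_matchingPower_deg_const (V : Type) [Fintype V] (K : Type) [Field K]
    (D : WOGraph V) (hpm : HasAtMostOnePerfectMatching D.graph)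
    (k : ℕ) (hk1 : 1 ≤ k) (hk2 : k ≤ matchingNumber D.graph)
    (hlr : lrCriterion (matchingPower (edgeIdealD K D) k))
    (a : V →₀ ℕ) (ha : a ∈ minGens (matchingPower (edgeIdealD K D) k))
    (x : V) (r : ℕ) (hx : a x = r) (hr : 1 < r) :
    ∀ b ∈ minGens (matchingPower (edgeIdealD K D) k), b x = r :=
  minGens_matchingPower_deg_const_general V K D hpm k hlr a ha x r hx hr

end MatchingPowers
end
end
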